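/- arXiv:0709.2791 — 4 statements merged into one kernel-verified Lean document; each statement's English description precedes it below -/
import Mathlib

section
/- Among all symmetric positive definite weighting matrices W, the choice W = P⁻¹ (P symmetric positive definite) minimizes the projected covariance (I - Υ_W A) P (I - Υ_W A)ᵀ in the Loewner order, where Υ_W = W⁻¹Aᵀ(A W⁻¹ Aᵀ)⁻¹: for every such W, (I - Υ_W A) P (I - Υ_W A)ᵀ - (I - Υ_{P⁻¹} A) P (I - Υ_{P⁻¹} A)ᵀ is positive semidefinite. -/
/-!
With `S = A P Aᵀ` and `K = P Aᵀ S⁻¹`, completing the square gives, for every gain `B`,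
`(I - B A) P (I - B A)ᵀ = (I - K A) P (I - K A)ᵀ + (B - K) S (B - K)ᵀ`.
The last term is positive semidefinite and `K = Υ_{P⁻¹}` (`optimalGain`); full row rank of `A`
makes `S` positive definite, hence invertible. Taking `B = Υ_W` gives the claim.
-/

namespace Matrix

variable {m n R : Type*} [Fintype m] [Fintype n]

theorem vecMul_injective_of_rank_eq_card [Field R] {A : Matrix m n R}
    (hA : A.rank = Fintype.card m) : Function.Injective A.vecMul :=
  vecMul_injective_iff.mpr <| linearIndependent_iff_card_eq_finrank_span.mpr <| by
    rw [Set.finrank, ← rank_eq_finrank_span_row, hA]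

variable [DecidableEq m] [DecidableEq n]

noncomputable def optimalGain [CommRing R] [StarRing R] (P : Matrix n n R) (A : Matrix m n R) :
    Matrix n m R :=
  P * Aᴴ * (A * P * Aᴴ)⁻¹

theorem mul_mul_conjTranspose_eq_optimalGain_add [CommRing R] [StarRing R]
    {P : Matrix n n R} (hP : P.IsHermitian) {A : Matrix m n R}
    (hS : IsUnit (A * P * Aᴴ).det) (B : Matrix n m R) :
    (1 - B * A) * P * (1 - B * A)ᴴ =
      (1 - optimalGain P A * A) * P * (1 - optimalGain P A * A)ᴴ +
        (B - optimalGain P A) * (A * P * Aᴴ) * (B - optimalGain P A)ᴴ := by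
  unfold optimalGain
  generalize hS_def : A * P * Aᴴ = S at hS ⊢
  have hSinv : S⁻¹ᴴ = S⁻¹ := by
    rw [conjTranspose_nonsing_inv, ← hS_def, conjTranspose_mul, conjTranspose_mul,
      conjTranspose_conjTranspose, hP.eq, Matrix.mul_assoc]
  have hAPA (X : Matrix m n R) : A * (P * (Aᴴ * X)) = S * X := by
    simp only [← hS_def, Matrix.mul_assoc]
  have hSS (X : Matrix m n R) : S * (S⁻¹ * X) = X := by
    rw [← Matrix.mul_assoc, mul_nonsing_inv _ hS, Matrix.one_mul]
  have hSS' (X : Matrix m n R) : S⁻¹ * (S * X) = X := by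
    rw [← Matrix.mul_assoc, nonsing_inv_mul _ hS, Matrix.one_mul]
  simp only [conjTranspose_sub, conjTranspose_one, conjTranspose_mul,
    conjTranspose_conjTranspose, hP.eq, hSinv, Matrix.sub_mul, Matrix.mul_sub,
    Matrix.one_mul, Matrix.mul_one, Matrix.mul_assoc, hAPA, hSS, hSS']
  abel

theorem PosSemidef.sub_optimalGain [CommRing R] [PartialOrder R] [StarRing R]
    {P : Matrix n n R} (hP : P.PosSemidef) {A : Matrix m n R}
    (hS : IsUnit (A * P * Aᴴ).det) (B : Matrix n m R) :
    ((1 - B * A) * P * (1 - B * A)ᴴ -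
      (1 - optimalGain P A * A) * P * (1 - optimalGain P A * A)ᴴ).PosSemidef := by
  rw [mul_mul_conjTranspose_eq_optimalGain_add hP.isHermitian hS B, add_sub_cancel_left]
  exact (hP.mul_mul_conjTranspose_same A).mul_mul_conjTranspose_same _

end Matrix

open Matrix

/-- Among all symmetric positive definite weightings `W`, the choice `W = P⁻¹` minimizes
the projected covariance `(I - Υ_W A) P (I - Υ_W A)ᵀ` in the Loewner order. -/
theorem stmt5 {n q : ℕ} (P : Matrix (Fin n) (Fin n) ℝ) (hP : P.PosDef)
    (A : Matrix (Fin q) (Fin n) ℝ) (hA : A.rank = q) :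
    ∀ W : Matrix (Fin n) (Fin n) ℝ, W.PosDef →
      ((1 - (W⁻¹ * Aᵀ * (A * W⁻¹ * Aᵀ)⁻¹) * A) * P *
          (1 - (W⁻¹ * Aᵀ * (A * W⁻¹ * Aᵀ)⁻¹) * A)ᵀ -
        (1 - ((P⁻¹)⁻¹ * Aᵀ * (A * (P⁻¹)⁻¹ * Aᵀ)⁻¹) * A) * P *
          (1 - ((P⁻¹)⁻¹ * Aᵀ * (A * (P⁻¹)⁻¹ * Aᵀ)⁻¹) * A)ᵀ).PosSemidef := by
  intro W _
  have hS : (A * P * Aᴴ).PosDef :=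
    hP.mul_mul_conjTranspose_same (vecMul_injective_of_rank_eq_card (by simpa using hA))
  rw [nonsing_inv_nonsing_inv P ((isUnit_iff_isUnit_det P).mp hP.isUnit)]
  simpa only [optimalGain, conjTranspose_eq_transpose_of_trivial] using
    hP.posSemidef.sub_optimalGain ((isUnit_iff_isUnit_det _).mp hS.isUnit)
      (W⁻¹ * Aᵀ * (A * W⁻¹ * Aᵀ)⁻¹)
end

section
/- Let P be an n×n symmetric positive semidefinite matrix, H an m×n matrix, R an m×m symmetric positive definite matrix, and S = H P Hᵀ + R. Then K* = P Hᵀ S⁻¹ minimizes the function K ↦ trace[(I - K H) P (I - K H)ᵀ + K R Kᵀ] over all n×m matrices K. -/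
/-!
Expanding the Joseph-form covariance gives a matrix quadratic in the gain,
`P - K (H P) - (H P)ᵀ Kᵀ + K S Kᵀ` with `S = H P Hᵀ + R`. Since `K* S = P Hᵀ`,
completing the square yields `cov K = cov K* + (K - K*) S (K - K*)ᵀ`, and the last term
is positive semidefinite, so it has nonnegative trace.
-/

open Matrix

namespace Matrix

variable {ι κ α : Type*} [Fintype ι] [Fintype κ] [DecidableEq ι] [CommRing α]

/-- Joseph form of the updated error covariance for the gain `K`. -/
def josephCov (P : Matrix ι ι α) (H : Matrix κ ι α) (R : Matrix κ κ α) (K : Matrix ι κ α) :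
    Matrix ι ι α :=
  (1 - K * H) * P * (1 - K * H)ᵀ + K * R * Kᵀ

theorem josephCov_eq (P : Matrix ι ι α) (hP : Pᵀ = P) (H : Matrix κ ι α) (R : Matrix κ κ α)
    (K : Matrix ι κ α) :
    josephCov P H R K = P - K * (H * P) - (H * P)ᵀ * Kᵀ + K * (H * P * Hᵀ + R) * Kᵀ := by
  simp only [josephCov, transpose_sub, transpose_one, transpose_mul, hP, Matrix.sub_mul,
    Matrix.mul_sub, Matrix.mul_add, Matrix.add_mul, Matrix.one_mul, Matrix.mul_one,
    Matrix.mul_assoc]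
  abel

omit [Fintype ι] [DecidableEq ι] in
/-- Completing the square around a solution `K₀` of the normal equation `K₀ S = Cᵀ`. -/
theorem sub_mul_sub_add_mul_transpose_eq_add_of_mul_eq {A : Matrix ι ι α}
    {C : Matrix κ ι α} {S : Matrix κ κ α} (hS : Sᵀ = S) {K₀ : Matrix ι κ α}
    (hK₀ : K₀ * S = Cᵀ) (L : Matrix ι κ α) :
    A - L * C - Cᵀ * Lᵀ + L * S * Lᵀ =
      (A - K₀ * C - Cᵀ * K₀ᵀ + K₀ * S * K₀ᵀ) + (L - K₀) * S * (L - K₀)ᵀ := by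
  have hSK₀ : S * K₀ᵀ = C := by
    simpa only [transpose_mul, hS, transpose_transpose] using congrArg transpose hK₀
  have h₁ : L * S * K₀ᵀ = L * C := by rw [Matrix.mul_assoc, hSK₀]
  have h₂ : K₀ * S * Lᵀ = Cᵀ * Lᵀ := by rw [hK₀]
  have h₃ : K₀ * S * K₀ᵀ = Cᵀ * K₀ᵀ := by rw [hK₀]
  have h₄ : K₀ * S * K₀ᵀ = K₀ * C := by rw [Matrix.mul_assoc, hSK₀]
  simp only [transpose_sub, Matrix.mul_sub, Matrix.sub_mul]
  rw [h₁, h₂]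
  nth_rewrite 2 [h₃]
  rw [h₄]
  abel

theorem josephCov_eq_add (P : Matrix ι ι α) (hP : Pᵀ = P) (H : Matrix κ ι α)
    (R : Matrix κ κ α) (hR : Rᵀ = R) {K₀ : Matrix ι κ α}
    (hK₀ : K₀ * (H * P * Hᵀ + R) = P * Hᵀ) (K : Matrix ι κ α) :
    josephCov P H R K =
      josephCov P H R K₀ + (K - K₀) * (H * P * Hᵀ + R) * (K - K₀)ᵀ := by
  have hS : (H * P * Hᵀ + R)ᵀ = H * P * Hᵀ + R := by
    simp only [transpose_add, transpose_mul, transpose_transpose, hP, hR, Matrix.mul_assoc]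
  have hC : (H * P)ᵀ = P * Hᵀ := by rw [transpose_mul, hP]
  rw [josephCov_eq P hP, josephCov_eq P hP]
  exact sub_mul_sub_add_mul_transpose_eq_add_of_mul_eq hS (hK₀.trans hC.symm) K

end Matrix

/-- `K* = P Hᵀ S⁻¹` minimizes `K ↦ trace[(I - KH)P(I - KH)ᵀ + K R Kᵀ]`. -/
theorem stmt6 {n m : ℕ} (P : Matrix (Fin n) (Fin n) ℝ) (hP : P.PosSemidef)
    (H : Matrix (Fin m) (Fin n) ℝ) (R : Matrix (Fin m) (Fin m) ℝ) (hR : R.PosDef)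
    (S : Matrix (Fin m) (Fin m) ℝ) (hS : S = H * P * Hᵀ + R)
    (Kstar : Matrix (Fin n) (Fin m) ℝ) (hK : Kstar = P * Hᵀ * S⁻¹) :
    ∀ K : Matrix (Fin n) (Fin m) ℝ,
      ((1 - Kstar * H) * P * (1 - Kstar * H)ᵀ + Kstar * R * Kstarᵀ).trace ≤
        ((1 - K * H) * P * (1 - K * H)ᵀ + K * R * Kᵀ).trace := by
  intro K
  have hSpd : S.PosDef := by
    rw [hS, ← conjTranspose_eq_transpose_of_trivial]
    exact PosDef.posSemidef_add (hP.mul_mul_conjTranspose_same H) hR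
  have hKstar : Kstar * S = P * Hᵀ := by
    rw [hK, nonsing_inv_mul_cancel_right _ _ ((isUnit_iff_isUnit_det S).mp hSpd.isUnit)]
  have hgap : ((K - Kstar) * S * (K - Kstar)ᵀ).PosSemidef := by
    simpa only [Matrix.mul_assoc, conjTranspose_eq_transpose_of_trivial] using
      hSpd.posSemidef.mul_mul_conjTranspose_same (K - Kstar)
  have hsplit := josephCov_eq_add P hP.isHermitian.eq H R hR.isHermitian.eq (hS ▸ hKstar) K
  rw [← hS] at hsplit
  change (josephCov P H R Kstar).trace ≤ (josephCov P H R K).trace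
  rw [hsplit, trace_add]
  exact le_add_of_nonneg_right hgap.trace_nonneg
end

section
/- With P symmetric PSD, R symmetric positive definite, S = H P Hᵀ + R, and K* = P Hᵀ S⁻¹, for every n×m matrix K: trace[(I - KH)P(I - KH)ᵀ + K R Kᵀ] = trace[P - P Hᵀ S⁻¹ H P] + trace[(K - K*) S (K - K*)ᵀ]. In particular the objective exceeds its minimum by trace[(K - K*) S (K - K*)ᵀ] ≥ 0. -/
/-!
Write `K* = P Hᵀ S⁻¹`. Since `K* S = P Hᵀ` and `S`, `P` are symmetric, expanding both sides shows
that the objective and `P - P Hᵀ S⁻¹ H P + (K - K*) S (K - K*)ᵀ` are equal as matrices: both are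
`P - K H P - (K H P)ᵀ + K S Kᵀ`. The second summand is a congruence of the positive definite
matrix `S = H P Hᵀ + R`, so its trace is nonnegative.
-/

open Matrix

section CompletingTheSquare

variable {α n m : Type*} [CommRing α]

theorem kalman_objective_eq_expand [Fintype n] [DecidableEq n] [Fintype m]
    {P : Matrix n n α} (hP : P.IsSymm) (H : Matrix m n α) (R : Matrix m m α)
    (K : Matrix n m α) :
    (1 - K * H) * P * (1 - K * H)ᵀ + K * R * Kᵀ =
      P - K * (H * P) - (K * (H * P))ᵀ + K * (H * P * Hᵀ + R) * Kᵀ := by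
  simp only [transpose_sub, transpose_one, transpose_mul, hP.eq, Matrix.sub_mul, Matrix.mul_sub,
    Matrix.mul_add, Matrix.add_mul, Matrix.one_mul, Matrix.mul_one, Matrix.mul_assoc]
  abel

theorem sub_mul_mul_transpose_sub [Fintype m] {S : Matrix m m α} (hS : S.IsSymm)
    {G : Matrix n m α} {C : Matrix m n α} (hG : (G * S)ᵀ = C) (K : Matrix n m α) :
    (K - G) * S * (K - G)ᵀ = K * S * Kᵀ - K * C - (K * C)ᵀ + G * C := by
  have hSG : S * Gᵀ = C := by rw [← hG, transpose_mul, hS.eq]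
  have hGS : G * S * Kᵀ = (K * C)ᵀ := by rw [← hG, transpose_mul, transpose_transpose]
  simp only [transpose_sub, Matrix.sub_mul, Matrix.mul_sub, hGS, Matrix.mul_assoc, hSG]
  abel

theorem kalman_objective_eq_add_sq [Fintype n] [DecidableEq n] [Fintype m] [DecidableEq m]
    {P : Matrix n n α} (hP : P.IsSymm) (H : Matrix m n α) (R : Matrix m m α)
    {S : Matrix m m α} (hS : S = H * P * Hᵀ + R) (hS_symm : S.IsSymm) (hS_det : IsUnit S.det)
    (K : Matrix n m α) :
    (1 - K * H) * P * (1 - K * H)ᵀ + K * R * Kᵀ =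
      P - P * Hᵀ * S⁻¹ * H * P + (K - P * Hᵀ * S⁻¹) * S * (K - P * Hᵀ * S⁻¹)ᵀ := by
  have hgain : (P * Hᵀ * S⁻¹ * S)ᵀ = H * P := by
    rw [Matrix.mul_assoc, nonsing_inv_mul S hS_det, Matrix.mul_one, transpose_mul,
      transpose_transpose, hP.eq]
  rw [kalman_objective_eq_expand hP, ← hS, sub_mul_mul_transpose_sub hS_symm hgain]
  simp only [Matrix.mul_assoc]
  abel

end CompletingTheSquare

theorem Matrix.PosSemidef.mul_mul_transpose_same {R m n : Type*} [CommRing R] [PartialOrder R]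
    [StarRing R] [TrivialStar R] [Fintype m] [Finite n] {A : Matrix m m R} (hA : A.PosSemidef)
    (B : Matrix n m R) : (B * A * Bᵀ).PosSemidef := by
  simpa only [conjTranspose_eq_transpose_of_trivial] using hA.mul_mul_conjTranspose_same B

/-- Exact completion-of-squares identity for the Kalman gain objective, and the
resulting excess-over-minimum bound. -/
theorem stmt7 {n m : ℕ} (P : Matrix (Fin n) (Fin n) ℝ) (hP : P.PosSemidef)
    (H : Matrix (Fin m) (Fin n) ℝ) (R : Matrix (Fin m) (Fin m) ℝ) (hR : R.PosDef)
    (S : Matrix (Fin m) (Fin m) ℝ) (hS : S = H * P * Hᵀ + R)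
    (Kstar : Matrix (Fin n) (Fin m) ℝ) (hK : Kstar = P * Hᵀ * S⁻¹) :
    ∀ K : Matrix (Fin n) (Fin m) ℝ,
      ((1 - K * H) * P * (1 - K * H)ᵀ + K * R * Kᵀ).trace =
          (P - P * Hᵀ * S⁻¹ * H * P).trace +
            ((K - Kstar) * S * (K - Kstar)ᵀ).trace ∧
        0 ≤ ((K - Kstar) * S * (K - Kstar)ᵀ).trace := by
  intro K
  have hS_pos : S.PosDef := hS ▸ .posSemidef_add (hP.mul_mul_transpose_same H) hR
  have hP_symm : P.IsSymm := isHermitian_iff_isSymm.mp hP.isHermitian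
  have hS_symm : S.IsSymm := isHermitian_iff_isSymm.mp hS_pos.isHermitian
  refine ⟨?_, (hS_pos.posSemidef.mul_mul_transpose_same _).trace_nonneg⟩
  rw [hK, kalman_objective_eq_add_sq hP_symm H R hS hS_symm hS_pos.det_pos.ne'.isUnit,
    trace_add]
end

section
/- Let S be an m×m symmetric positive definite matrix, ν ∈ ℝ^m a nonzero vector, A a q×n matrix of full row rank, x̂ ∈ ℝⁿ, K₀ ∈ ℝ^{n×m}, and b ∈ ℝ^q. Then the minimizer of the quadratic lᵀ(S ⊗ I_n)l over l ∈ ℝ^{mn} subject to (νᵀ ⊗ A)l = b - A(x̂ + K₀ν) is l* = vec[Aᵀ(A Aᵀ)⁻¹(b - A(x̂ + K₀ν))(νᵀS⁻¹ν)⁻¹ νᵀS⁻¹]. -/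
open Matrix Kronecker

/-!
Write `Q = S ⊗ I_n` and `C = νᵀ ⊗ A`. By `(B ⊗ A) vec(x yᵀ) = vec((A x)(B y)ᵀ)`, the candidate
`l* = c · vec(w uᵀ)` with `u = S⁻¹ν`, `w = Aᵀ(AAᵀ)⁻¹r`, `c = (νᵀu)⁻¹` satisfies `C l* = r` and
`Q l* = c · vec(w νᵀ) = Cᵀ μ` for `μ = c · (AAᵀ)⁻¹r`. These are the Lagrange conditions: for feasible
`l = l* + d` we have `C d = 0`, hence `l*ᵀQd = μᵀCd = 0` and `lᵀQl = l*ᵀQl* + dᵀQd`, which exceeds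
`l*ᵀQl*` when `d ≠ 0` because `Q` is positive definite.
-/

/-- Column-stacking vectorization of a matrix. -/
def vecOf {m n : ℕ} (A : Matrix (Fin m) (Fin n) ℝ) : Fin n × Fin m → ℝ :=
  fun p => A p.2 p.1

namespace Matrix

variable {ι κ l m n p : Type*}

theorem isUnit_of_rank_eq_card {K : Type*} [Field K] [Fintype n] [DecidableEq n]
    {M : Matrix n n K} (h : M.rank = Fintype.card n) : IsUnit M := by
  have hrange : LinearMap.range M.mulVecLin = ⊤ := by
    apply Submodule.eq_top_of_finrank_eq
    rw [Module.finrank_fintype_fun_eq_card]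
    exact h
  exact mulVec_surjective_iff_isUnit.mp (LinearMap.range_eq_top.mp hrange)

theorem isUnit_mul_transpose_of_rank_eq_card {K : Type*} [Field K] [LinearOrder K]
    [IsStrictOrderedRing K] [Fintype m] [DecidableEq m] [Fintype n] {A : Matrix m n K}
    (h : A.rank = Fintype.card m) : IsUnit (A * Aᵀ) :=
  isUnit_of_rank_eq_card (by rwa [rank_self_mul_transpose])

theorem kronecker_mulVec_vec_vecMulVec {R : Type*} [CommSemiring R] [Fintype m] [Fintype n]
    (A : Matrix l m R) (B : Matrix p n R) (x : m → R) (y : n → R) :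
    (B ⊗ₖ A) *ᵥ vec (vecMulVec x y) = vec (vecMulVec (A *ᵥ x) (B *ᵥ y)) := by
  rw [kronecker_mulVec_vec, mul_vecMulVec, vecMulVec_mul, vecMul_transpose]

theorem PosDef.dotProduct_mulVec_lt_of_mulVec_eq_transpose_mulVec {R : Type*} [CommRing R]
    [PartialOrder R] [IsOrderedRing R] [StarRing R] [TrivialStar R] [Fintype ι] [Fintype κ]
    {Q : Matrix ι ι R} (hQ : Q.PosDef) {C : Matrix κ ι R} {x y : ι → R} {μ : κ → R}
    (hx : Q *ᵥ x = Cᵀ *ᵥ μ) (hxy : C *ᵥ x = C *ᵥ y) (hne : y ≠ x) :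
    x ⬝ᵥ Q *ᵥ x < y ⬝ᵥ Q *ᵥ y := by
  set d := y - x
  have hCd : C *ᵥ d = 0 := by rw [mulVec_sub, hxy, sub_self]
  have horth : d ⬝ᵥ Q *ᵥ x = 0 := by
    rw [hx, dotProduct_mulVec, vecMul_transpose, dotProduct_comm, hCd, dotProduct_zero]
  have horth' : x ⬝ᵥ Q *ᵥ d = 0 := by
    rw [dotProduct_mulVec, ← hQ.isHermitian.eq, conjTranspose_eq_transpose_of_trivial,
      vecMul_transpose, dotProduct_comm, horth]
  have hpos : 0 < d ⬝ᵥ Q *ᵥ d := by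
    simpa only [star_trivial] using hQ.dotProduct_mulVec_pos (sub_ne_zero.mpr hne)
  have hy : y = x + d := (add_sub_cancel x y).symm
  rw [hy, mulVec_add, dotProduct_add, add_dotProduct, add_dotProduct, horth, horth', zero_add,
    add_zero]
  exact lt_add_of_pos_right _ hpos

end Matrix

theorem stmt8_general {m n q : ℕ} (S : Matrix (Fin m) (Fin m) ℝ) (hS : S.PosDef)
    (ν : Fin m → ℝ) (hν : ν ≠ 0)
    (A : Matrix (Fin q) (Fin n) ℝ) (hA : A.rank = q)
    (r : Fin q → ℝ)
    (lstar : Fin m × Fin n → ℝ)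
    (hl : lstar = vecOf ((ν ⬝ᵥ S⁻¹.mulVec ν)⁻¹ •
      vecMulVec ((Aᵀ * (A * Aᵀ)⁻¹).mulVec r) (vecMul ν S⁻¹))) :
    ((Matrix.of (fun (_ : Fin 1) (j : Fin m) => ν j) ⊗ₖ A).mulVec lstar = fun p => r p.2) ∧
      ∀ l : Fin m × Fin n → ℝ,
        ((Matrix.of (fun (_ : Fin 1) (j : Fin m) => ν j) ⊗ₖ A).mulVec l = fun p => r p.2) → l ≠ lstar →
          lstar ⬝ᵥ (S ⊗ₖ (1 : Matrix (Fin n) (Fin n) ℝ)).mulVec lstar <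
            l ⬝ᵥ (S ⊗ₖ (1 : Matrix (Fin n) (Fin n) ℝ)).mulVec l := by
  set c := (ν ⬝ᵥ S⁻¹ *ᵥ ν)⁻¹
  set z := (A * Aᵀ)⁻¹ *ᵥ r
  have hu : vecMul ν S⁻¹ = S⁻¹ *ᵥ ν := by
    rw [← vecMul_transpose, transpose_nonsing_inv, ← conjTranspose_eq_transpose_of_trivial,
      hS.isHermitian.eq]
  have hSu : S *ᵥ (S⁻¹ *ᵥ ν) = ν := by
    rw [mulVec_mulVec, mul_nonsing_inv _ ((isUnit_iff_isUnit_det S).mp hS.isUnit), one_mulVec]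
  have hc : c * (ν ⬝ᵥ S⁻¹ *ᵥ ν) = 1 := inv_mul_cancel₀ (hS.inv.dotProduct_mulVec_pos hν).ne'
  have hAz : A *ᵥ (Aᵀ *ᵥ z) = r := by
    rw [mulVec_mulVec, mulVec_mulVec, mul_nonsing_inv _ ((isUnit_iff_isUnit_det _).mp
      (isUnit_mul_transpose_of_rank_eq_card (by simpa using hA))), one_mulVec]
  have hlstar : lstar = c • vec (vecMulVec (Aᵀ *ᵥ z) (S⁻¹ *ᵥ ν)) := by
    rw [hl, hu, ← mulVec_mulVec]
    rfl
  have hC : (of (fun (_ : Fin 1) (j : Fin m) => ν j) ⊗ₖ A) *ᵥ lstar = fun p => r p.2 := by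
    rw [hlstar, mulVec_smul, kronecker_mulVec_vec_vecMulVec, hAz]
    ext p
    change c * (r p.2 * (ν ⬝ᵥ S⁻¹ *ᵥ ν)) = r p.2
    rw [mul_left_comm, hc, mul_one]
  have hQ : (S ⊗ₖ (1 : Matrix (Fin n) (Fin n) ℝ)) *ᵥ lstar
      = (of (fun (_ : Fin 1) (j : Fin m) => ν j) ⊗ₖ A)ᵀ *ᵥ (c • vec (vecMulVec z 1)) := by
    rw [hlstar, mulVec_smul, mulVec_smul, kronecker_mulVec_vec_vecMulVec, ← kroneckerMap_transpose,
      kronecker_mulVec_vec_vecMulVec, hSu, one_mulVec]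
    congr 3
    ext j
    simp [mulVec, dotProduct]
  exact ⟨hC, fun l hlC hne =>
    (hS.kronecker PosDef.one).dotProduct_mulVec_lt_of_mulVec_eq_transpose_mulVec hQ
      (hC.trans hlC.symm) hne⟩

/-- The unique minimizer of `lᵀ (S ⊗ I_n) l` subject to `(νᵀ ⊗ A) l = b - A(x̂ + K₀ν)` is
`l* = vec[Aᵀ(AAᵀ)⁻¹(b - A(x̂ + K₀ν))(νᵀS⁻¹ν)⁻¹ νᵀS⁻¹]`. -/
theorem stmt8 {m n q : ℕ} (S : Matrix (Fin m) (Fin m) ℝ) (hS : S.PosDef)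
    (ν : Fin m → ℝ) (hν : ν ≠ 0)
    (A : Matrix (Fin q) (Fin n) ℝ) (hA : A.rank = q)
    (xhat : Fin n → ℝ) (K₀ : Matrix (Fin n) (Fin m) ℝ) (b : Fin q → ℝ)
    (r : Fin q → ℝ) (hr : r = b - A.mulVec (xhat + K₀.mulVec ν))
    (lstar : Fin m × Fin n → ℝ)
    (hl : lstar = vecOf ((ν ⬝ᵥ S⁻¹.mulVec ν)⁻¹ •
      vecMulVec ((Aᵀ * (A * Aᵀ)⁻¹).mulVec r) (vecMul ν S⁻¹))) :
    ((Matrix.of (fun (_ : Fin 1) (j : Fin m) => ν j) ⊗ₖ A).mulVec lstar = fun p => r p.2) ∧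
      ∀ l : Fin m × Fin n → ℝ,
        ((Matrix.of (fun (_ : Fin 1) (j : Fin m) => ν j) ⊗ₖ A).mulVec l = fun p => r p.2) → l ≠ lstar →
          lstar ⬝ᵥ (S ⊗ₖ (1 : Matrix (Fin n) (Fin n) ℝ)).mulVec lstar <
            l ⬝ᵥ (S ⊗ₖ (1 : Matrix (Fin n) (Fin n) ℝ)).mulVec l :=
  stmt8_general S hS ν hν A hA r lstar hl
end
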